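/- Let d ∈ {1,2} and let k ∈ T^d have at least one coordinate different from π. Then ∫_{T^d} (𝓔_k(q) − E_min(k))^{-1} dη(q) = +∞, i.e. the nonnegative function q ↦ (𝓔_k(q) − E_min(k))^{-1} (defined a.e.) is not Lebesgue integrable on T^d. -/

import Mathlib

open MeasureTheory Real Filter

noncomputable section

instance fact_two_pi_pos : Fact (0 < 2 * Real.pi) := ⟨by positivity⟩

/-- The `d`-dimensional torus `(ℝ/2πℤ)^d`. -/
abbrev Torus (d : ℕ) : Type := Fin d → AddCircle (2 * Real.pi)

/-- Cosine as a function on the circle `ℝ/2πℤ`. -/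
noncomputable def torusCos : AddCircle (2 * Real.pi) → ℝ := Real.cos_periodic.lift

/-- The one-particle dispersion `ε(p) = 2∑ᵢ (1 − cos pⁱ)` on the torus. -/
noncomputable def eps (d : ℕ) (p : Torus d) : ℝ := 2 * ∑ i, (1 - torusCos (p i))

/-- The normalized Haar measure `η` on the torus `T^d`. -/
noncomputable def η (d : ℕ) : Measure (Torus d) :=
  Measure.pi fun _ => (AddCircle.haarAddCircle : Measure (AddCircle (2 * Real.pi)))

instance (d : ℕ) : IsProbabilityMeasure (η d) := by unfold η; infer_instance

/-- The two-particle fiber dispersion `𝓔ₖ(p) = ε(k−p) + ε(p)`. -/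
noncomputable def calE (d : ℕ) (k p : Torus d) : ℝ := eps d (k - p) + eps d p

/-- `E_min(k) = min_{p ∈ T^d} 𝓔ₖ(p)`. -/
noncomputable def Emin (d : ℕ) (k : Torus d) : ℝ := sInf (Set.range (calE d k))

/-- `E_max(k) = max_{p ∈ T^d} 𝓔ₖ(p)`. -/
noncomputable def Emax (d : ℕ) (k : Torus d) : ℝ := sSup (Set.range (calE d k))

/-- The three-particle dispersion `E(K;p,q) = ε(K−p−q) + ε(p) + ε(q)`. -/
noncomputable def EE (d : ℕ) (K p q : Torus d) : ℝ := eps d (K - p - q) + eps d p + eps d q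

/-- `E_min(K) = min_{p,q ∈ T^d} E(K;p,q)`. -/
noncomputable def E3min (d : ℕ) (K : Torus d) : ℝ :=
  sInf (Set.range fun pq : Torus d × Torus d => EE d K pq.1 pq.2)

/-- `E_max(K) = max_{p,q ∈ T^d} E(K;p,q)`. -/
noncomputable def E3max (d : ℕ) (K : Torus d) : ℝ :=
  sSup (Set.range fun pq : Torus d × Torus d => EE d K pq.1 pq.2)

/-- The two-particle determinant `Δ_μ(k;z) = 1 + μ ∫ (𝓔ₖ(q) − z)⁻¹ dη(q)`. -/
noncomputable def Delta2 (d : ℕ) (μ : ℝ) (k : Torus d) (z : ℝ) : ℝ :=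
  1 + μ * ∫ q, (calE d k q - z)⁻¹ ∂(η d)

/-- The channel determinant `Δ_μ(K,p;z) = 1 + μ ∫ (E(K;p,q) − z)⁻¹ dη(q)`. -/
noncomputable def Delta3 (d : ℕ) (μ : ℝ) (K p : Torus d) (z : ℝ) : ℝ :=
  1 + μ * ∫ q, (EE d K p q - z)⁻¹ ∂(η d)

/-- The point `π ∈ ℝ/2πℤ`. -/
noncomputable def piPt : AddCircle (2 * Real.pi) := ((Real.pi : ℝ) : AddCircle (2 * Real.pi))

/-!
In each coordinate, `cos (x - p) + cos p = 2 cos (x / 2) cos (x / 2 - p)`. Hence, after a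
translation `p = b + θ`, the gap `𝓔ₖ(b + θ) - E_min(k)` equals `2 ∑ᵢ cᵢ (1 - cos θᵢ)` with
`cᵢ = 2 |cos (kᵢ / 2)| ∈ [0, 2]`, and `cᵢ > 0` whenever `kᵢ ≠ π`. So the gap is at most `2 ε(θ)`
and is positive off a null hyperplane, and the integrand dominates `(2 ε(θ))⁻¹` almost everywhere.
Lifting the torus to the cube `(-π, π]ᵈ`, `ε(θ) ≤ d ‖θ‖²`, and `‖θ‖⁻²` is not integrable near the
origin of `ℝᵈ` when `d ≤ 2`.
-/

open Set Metric

theorem lintegral_ball_norm_rpow_neg_eq_top {E : Type*} [NormedAddCommGroup E] [NormedSpace ℝ E]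
    [FiniteDimensional ℝ E] [Nontrivial E] [MeasurableSpace E] [BorelSpace E]
    (μ : Measure E) [μ.IsAddHaarMeasure] {s r : ℝ} (hs : Module.finrank ℝ E ≤ s) (hr : 0 < r) :
    ∫⁻ x in ball 0 r, ENNReal.ofReal (‖x‖ ^ (-s)) ∂μ = ⊤ := by
  by_contra! hfin
  rw [lintegral_ofReal_ne_top_iff_integrable (measurable_norm.pow_const _).aestronglyMeasurable
    (ae_of_all _ fun x => by positivity), ← IntegrableOn,
    integrableOn_fun_norm_addHaar μ (f := (· ^ (-s)))] at hfin
  have hpow : IntegrableOn (fun y : ℝ => y ^ ((Module.finrank ℝ E : ℝ) - 1 - s)) (Ioo 0 r) := by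
    refine hfin.congr_fun (fun y hy => ?_) measurableSet_Ioo
    dsimp only
    rw [smul_eq_mul, ← Real.rpow_natCast, ← Real.rpow_add hy.1,
      Nat.cast_sub Module.finrank_pos, Nat.cast_one, sub_eq_add_neg _ s]
  rw [intervalIntegral.integrableOn_Ioo_rpow_iff hr] at hpow
  linarith

theorem AddCircle.measurePreserving_coe_haarAddCircle {T : ℝ} [Fact (0 < T)] (t : ℝ) :
    MeasurePreserving ((↑) : ℝ → AddCircle T)
      ((T.toNNReal⁻¹ • volume).restrict (Ioc t (t + T))) AddCircle.haarAddCircle := by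
  convert (AddCircle.measurePreserving_mk T t).smul_measure T.toNNReal⁻¹ using 1
  · exact Measure.restrict_smul _ _ _
  · rw [AddCircle.volume_eq_smul_haarAddCircle, ENNReal.smul_def, smul_smul, ENNReal.ofReal,
      ← ENNReal.coe_mul, inv_mul_cancel₀ (by simpa using Fact.out (p := 0 < T)),
      ENNReal.coe_one, one_smul]

instance {T : ℝ} [Fact (0 < T)] : NullSingletonClass (AddCircle.haarAddCircle (T := T)) where
  measure_singleton x := by
    have h := AddCircle.volume_closedBall T (x := x) 0
    rw [closedBall_zero, AddCircle.volume_eq_smul_haarAddCircle, Measure.smul_apply, smul_eq_mul,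
      mul_zero, min_eq_right (Fact.out (p := 0 < T)).le, ENNReal.ofReal_zero, mul_eq_zero] at h
    exact h.resolve_left (by simpa using Fact.out (p := 0 < T))

lemma torusCos_coe (x : ℝ) : torusCos (x : AddCircle (2 * π)) = cos x := rfl

lemma torusCos_zero : torusCos 0 = 1 := cos_zero

@[fun_prop]
lemma continuous_torusCos : Continuous torusCos := continuous_cos.quotient_liftOn' _

@[fun_prop]
lemma continuous_eps (d : ℕ) : Continuous (eps d) := by
  unfold eps; fun_prop

lemma torusCos_le_one (θ : AddCircle (2 * π)) : torusCos θ ≤ 1 := by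
  induction θ using QuotientAddGroup.induction_on with
  | H x => exact cos_le_one x

lemma torusCos_lt_one {θ : AddCircle (2 * π)} (hθ : θ ≠ 0) : torusCos θ < 1 := by
  induction θ using QuotientAddGroup.induction_on with
  | H x =>
    refine (cos_le_one x).lt_of_ne fun h => hθ ?_
    obtain ⟨n, rfl⟩ := (cos_eq_one_iff x).mp h
    exact (AddCircle.coe_eq_zero_iff _).mpr ⟨n, zsmul_eq_mul _ _⟩

lemma eps_pos {d : ℕ} {θ : Torus d} (hθ : θ ≠ 0) : 0 < eps d θ := by
  obtain ⟨i, hi⟩ := Function.ne_iff.mp hθ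
  exact mul_pos two_pos (Finset.sum_pos' (fun j _ => sub_nonneg.mpr (torusCos_le_one _))
    ⟨i, Finset.mem_univ _, sub_pos.mpr (torusCos_lt_one hi)⟩)

lemma eps_coe_le (d : ℕ) (t : Fin d → ℝ) : eps d (fun i => t i) ≤ d * ‖t‖ ^ 2 := by
  unfold eps
  rw [Finset.mul_sum]
  calc ∑ i, 2 * (1 - torusCos (t i)) ≤ ∑ _ : Fin d, ‖t‖ ^ 2 := by
        refine Finset.sum_le_sum fun i _ => ?_
        have hcos := one_sub_sq_div_two_le_cos (x := t i)
        have hti : |t i| ≤ ‖t‖ := by simpa using norm_le_pi_norm t i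
        rw [torusCos_coe]
        nlinarith [sq_le_sq' (neg_le_of_abs_le hti) (le_of_abs_le hti)]
    _ = d * ‖t‖ ^ 2 := by simp

theorem measurePreserving_coe_torus (d : ℕ) :
    MeasurePreserving (fun (t : Fin d → ℝ) i => (t i : AddCircle (2 * π)))
      ((Measure.pi fun _ => (2 * π).toNNReal⁻¹ • volume).restrict
        (univ.pi fun _ => Ioc (-π) π)) (η d) := by
  rw [Measure.restrict_pi_pi]
  refine measurePreserving_pi _ _ fun _ => ?_
  simpa [neg_add_eq_sub, two_mul] using
    AddCircle.measurePreserving_coe_haarAddCircle (T := 2 * π) (-π)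

lemma coe_ne_zero_of_mem_pi_Ioc {d : ℕ} {t : Fin d → ℝ} (ht : t ∈ univ.pi fun _ => Ioc (-π) π)
    (h0 : t ≠ 0) : (fun i => (t i : AddCircle (2 * π))) ≠ 0 := by
  obtain ⟨i, hi⟩ := Function.ne_iff.mp h0
  have hIoc : Ioc (-π) π = Ioc (-π) (-π + 2 * π) := by ring_nf
  refine Function.ne_iff.mpr ⟨i, fun h => hi ?_⟩
  rwa [Pi.zero_apply, ← AddCircle.coe_zero, AddCircle.coe_eq_coe_iff_of_mem_Ioc
    (hIoc ▸ ht i trivial) (hIoc ▸ ⟨by linarith [pi_pos], pi_pos.le⟩)] at h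

theorem lintegral_inv_mul_eps_eq_top {d : ℕ} [NeZero d] (hd : d ≤ 2) {C : ℝ} (hC : 0 < C) :
    ∫⁻ θ, ENNReal.ofReal (C * eps d θ)⁻¹ ∂η d = ⊤ := by
  set μ : Measure (Fin d → ℝ) := Measure.pi fun _ => (2 * π).toNNReal⁻¹ • volume
  have : (((2 * π).toNNReal⁻¹ • volume : Measure ℝ)).IsAddHaarMeasure := by
    rw [ENNReal.smul_def]
    exact Measure.IsAddHaarMeasure.smul _ (by simp [pi_pos]) ENNReal.coe_ne_top
  have hball : ball (0 : Fin d → ℝ) π ⊆ univ.pi fun _ => Ioc (-π) π := by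
    rw [ball_pi _ pi_pos]
    exact pi_mono fun _ _ => by simpa [Real.ball_eq_Ioo] using Ioo_subset_Ioc_self
  have hlow : ∀ t ∈ ball (0 : Fin d → ℝ) π, ENNReal.ofReal ((C * d)⁻¹ * ‖t‖ ^ (-2 : ℝ)) ≤
      ENNReal.ofReal (C * eps d fun i => t i)⁻¹ := by
    intro t ht
    rcases eq_or_ne t 0 with rfl | h0
    · simp
    refine ENNReal.ofReal_le_ofReal ?_
    rw [Real.rpow_neg (norm_nonneg _), Real.rpow_two, ← mul_inv, mul_assoc]
    exact inv_anti₀ (mul_pos hC (eps_pos (coe_ne_zero_of_mem_pi_Ioc (hball ht) h0)))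
      (mul_le_mul_of_nonneg_left (eps_coe_le d t) hC.le)
  have hdiv := lintegral_ball_norm_rpow_neg_eq_top μ (s := 2) (by simpa using hd) pi_pos
  rw [← (measurePreserving_coe_torus d).lintegral_comp (by fun_prop)]
  refine top_unique (calc
    ⊤ = ∫⁻ t in ball 0 π, ENNReal.ofReal ((C * d)⁻¹ * ‖t‖ ^ (-2 : ℝ)) ∂μ := by
      simp_rw [ENNReal.ofReal_mul (inv_nonneg.mpr (by positivity : (0 : ℝ) ≤ C * d))]
      rw [lintegral_const_mul' _ _ ENNReal.ofReal_ne_top, hdiv, ENNReal.mul_top]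
      simp [hC, NeZero.pos d]
    _ ≤ ∫⁻ t in ball 0 π, ENNReal.ofReal (C * eps d fun i => t i)⁻¹ ∂μ :=
      setLIntegral_mono' measurableSet_ball hlow
    _ ≤ _ := lintegral_mono_set hball)

lemma cos_add_cos_sub (x y : ℝ) : cos (x - y) + cos y = 2 * cos (x / 2) * cos (x / 2 - y) := by
  rw [cos_add_cos]
  ring_nf

lemma coe_eq_piPt_of_cos_half_eq_zero {x : ℝ} (hx : cos (x / 2) = 0) :
    (x : AddCircle (2 * π)) = piPt := by
  obtain ⟨k, hk⟩ := cos_eq_zero_iff.mp hx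
  rw [piPt, ← sub_eq_zero, ← AddCircle.coe_sub, AddCircle.coe_eq_zero_iff]
  exact ⟨k, by rw [zsmul_eq_mul]; linarith⟩

lemma exists_torusCos_sub_add_torusCos_eq (a : AddCircle (2 * π)) :
    ∃ b : AddCircle (2 * π), ∃ c : ℝ, 0 ≤ c ∧ c ≤ 2 ∧ (a ≠ piPt → 0 < c) ∧
      ∀ θ, torusCos (a - (b + θ)) + torusCos (b + θ) = c * torusCos θ := by
  induction a using QuotientAddGroup.induction_on with
  | H x =>
    have hcos : ∀ σ t : ℝ, torusCos (x - ((x / 2 + σ : ℝ) + t)) + torusCos ((x / 2 + σ : ℝ) + t)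
        = 2 * cos (x / 2) * cos (σ + t) := fun σ t => by
      rw [← AddCircle.coe_add, ← AddCircle.coe_sub, torusCos_coe, torusCos_coe, cos_add_cos_sub,
        show x / 2 - (x / 2 + σ + t) = -(σ + t) by ring, cos_neg]
    rcases le_or_gt 0 (cos (x / 2)) with h | h
    · refine ⟨(x / 2 + 0 : ℝ), 2 * cos (x / 2), by linarith, by linarith [cos_le_one (x / 2)],
        fun hx => by
          linarith [h.lt_of_ne' (mt coe_eq_piPt_of_cos_half_eq_zero hx)], fun θ => ?_⟩
      induction θ using QuotientAddGroup.induction_on with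
      | H t => rw [hcos, zero_add, torusCos_coe]
    · refine ⟨(x / 2 + π : ℝ), -(2 * cos (x / 2)), by linarith,
        by linarith [neg_one_le_cos (x / 2)], fun _ => by linarith, fun θ => ?_⟩
      induction θ using QuotientAddGroup.induction_on with
      | H t => rw [hcos, add_comm π, cos_add_pi, torusCos_coe]; ring

section Gap

variable {d : ℕ} {k b : Torus d} {c : Fin d → ℝ}
  (hbc : ∀ i θ, torusCos (k i - (b i + θ)) + torusCos (b i + θ) = c i * torusCos θ)
include hbc

lemma calE_add_eq (θ : Torus d) : calE d k (b + θ) = ∑ i, (4 - 2 * (c i * torusCos (θ i))) := by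
  rw [calE, eps, eps, Finset.mul_sum, Finset.mul_sum, ← Finset.sum_add_distrib]
  refine Finset.sum_congr rfl fun i _ => ?_
  have := hbc i (θ i)
  simp only [Pi.sub_apply, Pi.add_apply]
  linarith

lemma Emin_eq (hc : ∀ i, 0 ≤ c i) : Emin d k = ∑ i, (4 - 2 * c i) := by
  refine IsLeast.csInf_eq ⟨⟨b, by simpa [torusCos_zero] using calE_add_eq hbc 0⟩, ?_⟩
  rintro _ ⟨q, rfl⟩
  rw [← add_sub_cancel b q, calE_add_eq hbc]
  exact Finset.sum_le_sum fun i _ => by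
    linarith [mul_le_of_le_one_right (hc i) (torusCos_le_one ((q - b) i))]

lemma calE_add_sub_Emin (hc : ∀ i, 0 ≤ c i) (θ : Torus d) :
    calE d k (b + θ) - Emin d k = 2 * ∑ i, c i * (1 - torusCos (θ i)) := by
  rw [calE_add_eq hbc, Emin_eq hbc hc, ← Finset.sum_sub_distrib, Finset.mul_sum]
  exact Finset.sum_congr rfl fun i _ => by ring

lemma calE_add_sub_Emin_le (hc : ∀ i, 0 ≤ c i) (hc₂ : ∀ i, c i ≤ 2) (θ : Torus d) :
    calE d k (b + θ) - Emin d k ≤ 2 * eps d θ := by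
  rw [calE_add_sub_Emin hbc hc, eps]
  gcongr 2 * ?_
  rw [Finset.mul_sum]
  exact Finset.sum_le_sum fun i _ =>
    mul_le_mul_of_nonneg_right (hc₂ i) (sub_nonneg.mpr (torusCos_le_one _))

lemma calE_add_sub_Emin_pos (hc : ∀ i, 0 ≤ c i) {i : Fin d} (hci : 0 < c i) {θ : Torus d}
    (hθ : θ i ≠ 0) : 0 < calE d k (b + θ) - Emin d k := by
  rw [calE_add_sub_Emin hbc hc]
  exact mul_pos two_pos (Finset.sum_pos'
    (fun j _ => mul_nonneg (hc j) (sub_nonneg.mpr (torusCos_le_one _)))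
    ⟨i, Finset.mem_univ _, mul_pos hci (sub_pos.mpr (torusCos_lt_one hθ))⟩)

end Gap

instance (d : ℕ) : (η d).IsAddLeftInvariant := by unfold η; infer_instance

/-- for `d ∈ {1,2}` and `k ∈ T^d` with a coordinate different from `π`,
the function `q ↦ (𝓔ₖ(q) − E_min(k))⁻¹` is not Lebesgue integrable on `T^d`
(its integral is `+∞`). -/
theorem divergence_at_bottom (d : ℕ) (hd : d = 1 ∨ d = 2) (k : Torus d)
    (hk : ∃ i, k i ≠ piPt) :
    (∫⁻ q, ENNReal.ofReal ((calE d k q - Emin d k)⁻¹) ∂(η d)) = ⊤ ∧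
    ¬ Integrable (fun q => (calE d k q - Emin d k)⁻¹) (η d) := by
  obtain ⟨i₀, hi₀⟩ := hk
  have : NeZero d := ⟨i₀.pos.ne'⟩
  choose b c hc₀ hc₂ hc_pos hbc using fun i => exists_torusCos_sub_add_torusCos_eq (k i)
  have hoff_axis : ∀ᵐ θ ∂η d, θ i₀ ≠ 0 :=
    ae_iff.mpr (by simpa [η] using Measure.pi_hyperplane _ i₀ 0)
  have hbound : ∀ᵐ θ ∂η d, ENNReal.ofReal (2 * eps d θ)⁻¹ ≤
      ENNReal.ofReal (calE d k (b + θ) - Emin d k)⁻¹ := by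
    filter_upwards [hoff_axis] with θ hθ
    exact ENNReal.ofReal_le_ofReal (inv_anti₀ (calE_add_sub_Emin_pos hbc hc₀ (hc_pos i₀ hi₀) hθ)
      (calE_add_sub_Emin_le hbc hc₀ hc₂ θ))
  have htop : ∫⁻ q, ENNReal.ofReal (calE d k q - Emin d k)⁻¹ ∂η d = ⊤ := by
    rw [← lintegral_add_left_eq_self _ b]
    exact top_unique ((lintegral_inv_mul_eps_eq_top (by omega) two_pos).symm.le.trans
      (lintegral_mono_ae hbound))
  exact ⟨htop, fun h => h.lintegral_lt_top.ne htop⟩
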